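/- For m even binary sources [X1;...;Xm] = L·[Y1;...;Ym] with L the lower-triangular all-ones matrix, the Yi independent, Y_i ~ Bernoulli(1/2) for i odd and Y_i ~ Bernoulli(p) for i even (0 < p < 1/2), any achievable rate tuple (R1,...,Rm) for distributed lossless computation of Z = X1 + ... + Xm (mod 2) satisfies R_i ≥ h(p) for every i, hence the sum rate is at least m·h(p). -/

import Mathlib

open scoped BigOperators

/-- Binary entropy function (in bits). -/
noncomputable def binH (p : ℝ) : ℝ :=
  -(p * Real.logb 2 p) - (1 - p) * Real.logb 2 (1 - p)

open Classical in
/-- `AchievableRate P g R` : the rate tuple `R` is achievable for distributed lossless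
computation of the function `g` of `m` memoryless sources with joint per-symbol pmf `P`:
for every rate slack `δ > 0` and error tolerance `ε > 0` there are a blocklength `n`,
separate encoders (one per source, of rates at most `R i + δ` bits/symbol) and a
decoder whose probability of failing to recover the `n` function values is at most `ε`. -/
def AchievableRate {m : ℕ} {α β : Type*} [Fintype α] [Fintype β]
    (P : (Fin m → α) → ℝ) (g : (Fin m → α) → β) (R : Fin m → ℝ) : Prop :=
  ∀ δ : ℝ, 0 < δ → ∀ ε : ℝ, 0 < ε →
    ∃ n : ℕ, 0 < n ∧ ∃ M : Fin m → ℕ,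
      (∀ i, Real.logb 2 (M i) / n ≤ R i + δ) ∧
      ∃ enc : ∀ i : Fin m, (Fin n → α) → Fin (M i),
      ∃ dec : (∀ i : Fin m, Fin (M i)) → (Fin n → β),
        (∑ x ∈ Finset.univ.filter
            (fun x : Fin n → (Fin m → α) =>
              dec (fun i => enc i (fun t => x t i)) ≠ fun t => g (x t)),
          ∏ t, P (x t)) ≤ ε

/-- The pmf of a `Bernoulli(p)` random variable with values in `F_2`. -/
noncomputable def bern (p : ℝ) (b : ZMod 2) : ℝ := if b = 1 then p else 1 - p

/-!
Work with 0-based indices, so the sources come in pairs `{2a, 2a+1}` and `Y_{2a+1} ~ Bern(p)`.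
Fix a source `i` with partner `j` in its pair. Then `U = X_i + X_j = Y_{2a+1}` is independent
of the other sources `(X_l)_{l ≠ i}`, and those together with `Z` determine `X_i`, hence `U`.
So if the decoder is also handed the other sources (at their most favourable realisation),
encoder `i` alone must convey `n` i.i.d. `Bern(p)` bits with small error probability. By the
strong converse for lossless source coding, this needs at least `n (h(p) - o(1))` bits.
The strong converse follows from a Chebyshev bound on the information density.
-/

open Finset Real

section IidSums

variable {α ι : Type*} [Fintype α] [Fintype ι] [DecidableEq ι]

theorem sum_pi_prod_eq_one (P : α → ℝ) (hP : ∑ a, P a = 1) :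
    ∑ u : ι → α, ∏ t, P (u t) = 1 := by
  rw [← Fintype.prod_sum]
  simp [hP]

theorem sum_prod_mul_mul_eq (P : α → ℝ) (hP : ∑ a, P a = 1) (f g : α → ℝ) (t s : ι) :
    ∑ u : ι → α, (∏ t', P (u t')) * (f (u t) * g (u s)) =
      if t = s then ∑ a, P a * (f a * g a) else (∑ a, P a * f a) * ∑ a, P a * g a := by
  set F : ι → α → ℝ := fun t' a =>
    P a * ((if t' = t then f a else 1) * if t' = s then g a else 1) with hF
  have hsplit : ∀ u : ι → α,
      (∏ t', P (u t')) * (f (u t) * g (u s)) = ∏ t', F t' (u t') := by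
    intro u
    simp only [hF, prod_mul_distrib, prod_ite_eq', mem_univ, if_true]
  rw [Fintype.sum_congr _ _ hsplit, ← Fintype.prod_sum]
  have hrest : ∀ t', t' ≠ t → t' ≠ s → ∑ a, F t' a = 1 := fun t' ht hs => by
    simp [hF, ht, hs, hP]
  split_ifs with hts
  · subst hts
    rw [Fintype.prod_eq_single t fun t' ht => hrest t' ht ht]
    simp [hF]
  · rw [Fintype.prod_eq_mul t s hts fun t' h => hrest t' h.1 h.2]
    simp [hF, hts, Ne.symm hts]

theorem sum_prod_mul_sq_sum_eq (P : α → ℝ) (hP : ∑ a, P a = 1) (g : α → ℝ)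
    (hg : ∑ a, P a * g a = 0) :
    ∑ u : ι → α, (∏ t, P (u t)) * (∑ t, g (u t)) ^ 2 =
      Fintype.card ι * ∑ a, P a * g a ^ 2 := by
  calc ∑ u : ι → α, (∏ t, P (u t)) * (∑ t, g (u t)) ^ 2
      = ∑ t, ∑ s, ∑ u : ι → α, (∏ t', P (u t')) * (g (u t) * g (u s)) := by
        simp_rw [sq, sum_mul_sum, mul_sum]
        rw [sum_comm]
        exact sum_congr rfl fun t _ => sum_comm
    _ = ∑ t : ι, ∑ s : ι, if t = s then ∑ a, P a * g a ^ 2 else 0 := by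
        simp_rw [sum_prod_mul_mul_eq P hP, hg, mul_zero, sq]
    _ = Fintype.card ι * ∑ a, P a * g a ^ 2 := by simp

end IidSums

section FiniteMass

variable {Ω : Type*} [Fintype Ω] (w : Ω → ℝ)

theorem sum_filter_le_abs_le_div (hw : ∀ ω, 0 ≤ w ω) (X : Ω → ℝ) {c : ℝ} (hc : 0 < c) :
    ∑ ω with c ≤ |X ω|, w ω ≤ (∑ ω, w ω * X ω ^ 2) / c ^ 2 := by
  rw [sum_div]
  calc ∑ ω with c ≤ |X ω|, w ω
      ≤ ∑ ω with c ≤ |X ω|, w ω * X ω ^ 2 / c ^ 2 := by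
        refine sum_le_sum fun ω hω => ?_
        have hX : c ^ 2 ≤ X ω ^ 2 := by
          rw [← sq_abs (X ω)]
          exact pow_le_pow_left₀ hc.le (mem_filter.mp hω).2 2
        rw [mul_div_assoc]
        exact le_mul_of_one_le_right (hw ω) ((one_le_div (by positivity)).mpr hX)
    _ ≤ ∑ ω, w ω * X ω ^ 2 / c ^ 2 :=
        sum_le_sum_of_subset_of_nonneg (filter_subset _ _)
          fun ω _ _ => div_nonneg (mul_nonneg (hw ω) (sq_nonneg _)) (sq_nonneg _)

theorem sum_le_card_mul_add_sum_filter_lt (hw : ∀ ω, 0 ≤ w ω) (S : Finset Ω) {θ : ℝ}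
    (hθ : 0 ≤ θ) : ∑ ω ∈ S, w ω ≤ #S * θ + ∑ ω with θ < w ω, w ω := by
  rw [← sum_filter_add_sum_filter_not S (fun ω => w ω ≤ θ)]
  refine add_le_add ?_ (sum_le_sum_of_subset_of_nonneg (fun ω hω => ?_) fun ω _ _ => hw ω)
  · calc ∑ ω ∈ S with w ω ≤ θ, w ω ≤ #(S.filter fun ω => w ω ≤ θ) • θ :=
          sum_le_card_nsmul _ _ _ fun ω hω => (mem_filter.mp hω).2
      _ ≤ #S * θ := by
          rw [nsmul_eq_mul]
          exact mul_le_mul_of_nonneg_right (by exact_mod_cast card_filter_le _ _) hθ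
  · simp only [mem_filter, not_le] at hω ⊢
    exact ⟨mem_univ ω, hω.2⟩

end FiniteMass

theorem sub_one_le_logb_of_half_le_mul_rpow {x E : ℝ} (h : 1 / 2 ≤ x * (2 : ℝ) ^ (-E)) :
    E - 1 ≤ logb 2 x := by
  have hx : (2 : ℝ) ^ (E - 1) ≤ x := by
    rw [rpow_neg two_pos.le, ← div_eq_mul_inv, le_div_iff₀ (rpow_pos_of_pos two_pos E)] at h
    rw [rpow_sub two_pos, rpow_one, div_le_iff₀ two_pos]
    linarith
  calc E - 1 = logb 2 ((2 : ℝ) ^ (E - 1)) := (logb_rpow two_pos (by norm_num)).symm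
    _ ≤ logb 2 x := logb_le_logb_of_le one_lt_two (rpow_pos_of_pos two_pos _) hx

section Bernoulli

variable {p : ℝ}

@[simp] theorem bern_zero (p : ℝ) : bern p 0 = 1 - p := by simp [bern]

@[simp] theorem bern_one (p : ℝ) : bern p 1 = p := by simp [bern]

theorem sum_zmod_two {M : Type*} [AddCommMonoid M] (f : ZMod 2 → M) :
    ∑ b, f b = f 0 + f 1 := Fin.sum_univ_two f

theorem sum_bern (p : ℝ) : ∑ b, bern p b = 1 := by simp [sum_zmod_two]

theorem bern_half (b : ZMod 2) : bern (1 / 2) b = 1 / 2 := by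
  unfold bern; split <;> norm_num

theorem bern_nonneg (hp0 : 0 ≤ p) (hp1 : p ≤ 1) (b : ZMod 2) : 0 ≤ bern p b := by
  unfold bern; split <;> linarith

theorem min_le_bern (b : ZMod 2) : min p (1 - p) ≤ bern p b := by
  unfold bern; split
  exacts [min_le_left _ _, min_le_right _ _]

theorem bern_pos (hp0 : 0 < p) (hp1 : p < 1) (b : ZMod 2) : 0 < bern p b :=
  (lt_min hp0 (by linarith)).trans_le (min_le_bern b)

noncomputable def selfInfo (p : ℝ) (b : ZMod 2) : ℝ := -logb 2 (bern p b)

theorem sum_bern_mul_selfInfo (p : ℝ) : ∑ b, bern p b * selfInfo p b = binH p := by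
  simp only [sum_zmod_two, selfInfo, bern_zero, bern_one, binH]
  ring

noncomputable def varentropy (p : ℝ) : ℝ := ∑ b, bern p b * (selfInfo p b - binH p) ^ 2

theorem binH_le_one (p : ℝ) : binH p ≤ 1 := by
  have h : binH p = binEntropy p / log 2 := by
    simp only [binH, binEntropy, logb, log_inv]
    ring
  rw [h, div_le_one (log_pos one_lt_two)]
  exact binEntropy_le_log_two

theorem prod_bern_eq_rpow {ι : Type*} [Fintype ι] (hp0 : 0 < p) (hp1 : p < 1)
    (u : ι → ZMod 2) :
    ∏ t, bern p (u t) = (2 : ℝ) ^ (-∑ t, selfInfo p (u t)) := by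
  rw [← sum_neg_distrib, rpow_sum_of_pos two_pos]
  refine prod_congr rfl fun t _ => ?_
  rw [selfInfo, neg_neg, rpow_logb two_pos (by norm_num) (bern_pos hp0 hp1 _)]

end Bernoulli

section BernoulliBlock

variable {p : ℝ} {n : ℕ}

theorem sum_prod_bern_filter_le (hp0 : 0 < p) (hp1 : p < 1) (hn : 0 < n) {d : ℝ} (hd : 0 < d) :
    ∑ u : Fin n → ZMod 2 with n * d ≤ |∑ t, (selfInfo p (u t) - binH p)|,
        ∏ t, bern p (u t)
      ≤ varentropy p / (n * d ^ 2) := by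
  have hcentered : ∑ b, bern p b * (selfInfo p b - binH p) = 0 := by
    simp only [mul_sub, sum_sub_distrib, sum_bern_mul_selfInfo, ← sum_mul, sum_bern, one_mul,
      sub_self]
  refine (sum_filter_le_abs_le_div _ (fun u => prod_nonneg fun t _ => bern_nonneg hp0.le hp1.le _)
    _ (by positivity)).trans_eq ?_
  rw [sum_prod_mul_sq_sum_eq _ (sum_bern p) _ hcentered, Fintype.card_fin, varentropy]
  field_simp

theorem sum_prod_bern_le (hp0 : 0 < p) (hp1 : p < 1) (hn : 0 < n) {d : ℝ} (hd : 0 < d)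
    (S : Finset (Fin n → ZMod 2)) :
    ∑ u ∈ S, ∏ t, bern p (u t)
      ≤ #S * (2 : ℝ) ^ (-(n * (binH p - d))) + varentropy p / (n * d ^ 2) := by
  refine (sum_le_card_mul_add_sum_filter_lt _
    (fun u => prod_nonneg fun t _ => bern_nonneg hp0.le hp1.le _) S
    (rpow_pos_of_pos two_pos _).le).trans (add_le_add le_rfl ?_)
  refine (sum_le_sum_of_subset_of_nonneg (fun u hu => ?_)
    fun u _ _ => prod_nonneg fun t _ => bern_nonneg hp0.le hp1.le _).trans
    (sum_prod_bern_filter_le hp0 hp1 hn hd)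
  rw [mem_filter, prod_bern_eq_rpow hp0 hp1, rpow_lt_rpow_left_iff one_lt_two] at hu
  rw [mem_filter, sum_sub_distrib, sum_const, card_univ, Fintype.card_fin, nsmul_eq_mul]
  exact ⟨mem_univ u, le_abs.mpr (Or.inr (by linarith [hu.2]))⟩

theorem eq_univ_of_one_sub_min_pow_lt (hp0 : 0 < p) (hp1 : p < 1) (S : Finset (Fin n → ZMod 2))
    (hS : 1 - min p (1 - p) ^ n < ∑ u ∈ S, ∏ t, bern p (u t)) : S = univ := by
  by_contra hne
  obtain ⟨u, hu⟩ : ∃ u, u ∉ S := by simpa [eq_univ_iff_forall] using hne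
  have hq : ∀ v : Fin n → ZMod 2, 0 ≤ ∏ t, bern p (v t) :=
    fun v => prod_nonneg fun t _ => bern_nonneg hp0.le hp1.le _
  have hmin : min p (1 - p) ^ n ≤ ∏ t, bern p (u t) := by
    have := prod_le_prod (s := univ) (fun _ _ => (lt_min hp0 (by linarith)).le)
      fun t _ => min_le_bern (u t)
    rwa [prod_const, card_univ, Fintype.card_fin] at this
  have hsub : ∑ v ∈ S, ∏ t, bern p (v t) ≤ ∑ v ∈ univ.erase u, ∏ t, bern p (v t) :=
    sum_le_sum_of_subset_of_nonneg
      (fun v hv => mem_erase.mpr ⟨ne_of_mem_of_not_mem hv hu, mem_univ v⟩) fun v _ _ => hq v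
  have hsplit := add_sum_erase univ (fun v : Fin n → ZMod 2 => ∏ t, bern p (v t)) (mem_univ u)
  rw [sum_pi_prod_eq_one _ (sum_bern p)] at hsplit
  linarith

end BernoulliBlock

theorem varentropy_nonneg {p : ℝ} (hp0 : 0 ≤ p) (hp1 : p ≤ 1) : 0 ≤ varentropy p :=
  sum_nonneg fun b _ => mul_nonneg (bern_nonneg hp0 hp1 b) (sq_nonneg _)

theorem one_le_logb_div_of_two_pow_le {n M : ℕ} (hn : 0 < n) (hM : 2 ^ n ≤ M) :
    1 ≤ logb 2 M / n := by
  rw [le_div_iff₀ (by exact_mod_cast hn), one_mul]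
  calc (n : ℝ) = logb 2 ((2 : ℝ) ^ n) := by rw [logb_pow, logb_self_eq_one one_lt_two, mul_one]
    _ ≤ logb 2 M := logb_le_logb_of_le one_lt_two (by positivity) (by exact_mod_cast hM)

theorem binH_sub_two_mul_le_logb_div {p : ℝ} (hp0 : 0 < p) (hp1 : p < 1) {n : ℕ} (hn : 0 < n)
    {d : ℝ} (hd : 0 < d) (hnd : 1 ≤ n * d) (hVn : varentropy p / (n * d ^ 2) ≤ 1 / 4)
    {S : Finset (Fin n → ZMod 2)} (hS : 3 / 4 ≤ ∑ u ∈ S, ∏ t, bern p (u t)) {M : ℕ}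
    (hM : #S ≤ M) : binH p - 2 * d ≤ logb 2 M / n := by
  set θ := (2 : ℝ) ^ (-(n * (binH p - d)))
  have hMθ : 1 / 2 ≤ (M : ℝ) * θ := by
    have hSM : (#S : ℝ) * θ ≤ M * θ :=
      mul_le_mul_of_nonneg_right (by exact_mod_cast hM) (rpow_pos_of_pos two_pos _).le
    linarith [sum_prod_bern_le hp0 hp1 hn hd S]
  rw [le_div_iff₀ (by exact_mod_cast hn)]
  linarith [sub_one_le_logb_of_half_le_mul_rpow hMθ]

theorem exists_pos_binH_sub_le_logb_div {p : ℝ} (hp0 : 0 < p) (hp1 : p < 1) {d : ℝ}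
    (hd : 0 < d) :
    ∃ ε > 0, ∀ n : ℕ, 0 < n → ∀ S : Finset (Fin n → ZMod 2),
      1 - ε ≤ ∑ u ∈ S, ∏ t, bern p (u t) → ∀ M : ℕ, #S ≤ M →
        binH p - 2 * d ≤ logb 2 M / n := by
  set c := min p (1 - p)
  have hc0 : 0 < c := lt_min hp0 (by linarith)
  have hV := varentropy_nonneg hp0.le hp1.le
  obtain ⟨N, hN⟩ := exists_nat_gt (4 * varentropy p / d ^ 2 + 1 / d)
  refine ⟨min (1 / 4) (c ^ N / 2), by positivity, fun n hn S hS M hM => ?_⟩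
  rcases le_or_gt n N with hnN | hNn
  · -- the error tolerance is below every atom, so decoding must be perfect
    have hSu : S = univ := by
      refine eq_univ_of_one_sub_min_pow_lt hp0 hp1 S ?_
      have hcn : c ^ N ≤ c ^ n := pow_le_pow_of_le_one hc0.le ((min_le_left _ _).trans hp1.le) hnN
      have hε : min (1 / 4) (c ^ N / 2) < c ^ N :=
        (min_le_right _ _).trans_lt (half_lt_self (pow_pos hc0 N))
      linarith
    rw [hSu, card_univ, Fintype.card_fun, ZMod.card, Fintype.card_fin] at hM
    linarith [binH_le_one p, one_le_logb_div_of_two_pow_le hn hM]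
  · have hNn' : (N : ℝ) < n := by exact_mod_cast hNn
    have hd2 : 0 ≤ 4 * varentropy p / d ^ 2 := by positivity
    refine binH_sub_two_mul_le_logb_div hp0 hp1 hn hd ?_ ?_
      (by linarith [min_le_left (1 / 4 : ℝ) (c ^ N / 2)]) hM
    · have : 1 / d < n := by linarith
      rw [div_lt_iff₀ hd] at this
      exact this.le
    · have : 4 * varentropy p / d ^ 2 < n := by linarith [one_div_pos.mpr hd]
      rw [div_lt_iff₀ (by positivity)] at this
      rw [div_le_iff₀ (by positivity)]
      linarith

section DistributedCoding

variable {m n : ℕ} {α β γ δ : Type*}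

def blockEquiv (e : β × γ ≃ α) (n : ℕ) :
    (Fin n → β) × (Fin n → γ) ≃ (Fin n → α) :=
  (Equiv.arrowProdEquivProdArrow _ (fun _ => β) fun _ => γ).symm.trans
    (Equiv.piCongrRight fun _ => e)

@[simp] theorem blockEquiv_apply (e : β × γ ≃ α) (u : Fin n → β) (r : Fin n → γ)
    (t : Fin n) :
    blockEquiv e n (u, r) t = e (u t, r t) := rfl

variable {M : Fin m → ℕ} (enc : ∀ j, (Fin n → α) → Fin (M j))
  (dec : (∀ j, Fin (M j)) → Fin n → δ)
  (g : (Fin m → α) → δ) (i : Fin m) (e : β × γ ≃ (Fin m → α))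

open Classical in
theorem card_filter_decode_eq_le [Fintype β]
    (hcol : ∀ u u' r, ∀ j ≠ i, e (u, r) j = e (u', r) j)
    (hg : ∀ r, Function.Injective fun u => g (e (u, r))) (r : Fin n → γ) :
    #{u | dec (fun j => enc j fun t => blockEquiv e n (u, r) t j) =
      fun t => g (blockEquiv e n (u, r) t)} ≤ M i := by
  refine (card_le_card_of_injOn (t := univ) (fun u => enc i fun t => blockEquiv e n (u, r) t i)
    (fun _ _ => mem_coe.mpr (mem_univ _)) fun u hu u' hu' hmsg_i => ?_).trans_eq (by simp)
  have hmsg : (fun j => enc j fun t => blockEquiv e n (u, r) t j) =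
      fun j => enc j fun t => blockEquiv e n (u', r) t j := by
    funext j
    by_cases hj : j = i
    · subst hj; exact hmsg_i
    · exact congrArg (enc j) (funext fun t => hcol _ _ _ j hj)
  have hgu : (fun t => g (blockEquiv e n (u, r) t)) = fun t => g (blockEquiv e n (u', r) t) := by
    rw [← (mem_filter.mp hu).2, ← (mem_filter.mp hu').2, hmsg]
  funext t
  exact hg (r t) (congrFun hgu t)

open Classical in
theorem exists_finset_card_le_one_sub_le [Fintype α] [Fintype β] [Fintype γ]
    (P : (Fin m → α) → ℝ) (Q : β → ℝ) (B : γ → ℝ)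
    (hPsum : ∑ x, P x = 1) (hQ : ∑ u, Q u = 1) (hB0 : ∀ r, 0 ≤ B r)
    (hP : ∀ u r, P (e (u, r)) = Q u * B r)
    (hcol : ∀ u u' r, ∀ j ≠ i, e (u, r) j = e (u', r) j)
    (hg : ∀ r, Function.Injective fun u => g (e (u, r))) {ε : ℝ}
    (herr : ∑ x ∈ univ.filter (fun x : Fin n → Fin m → α =>
        dec (fun j => enc j fun t => x t j) ≠ fun t => g (x t)), ∏ t, P (x t) ≤ ε) :
    ∃ S : Finset (Fin n → β), #S ≤ M i ∧ 1 - ε ≤ ∑ u ∈ S, ∏ t, Q (u t) := by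
  set ok : (Fin n → Fin m → α) → Prop :=
    fun x => dec (fun j => enc j fun t => x t j) = fun t => g (x t)
  set S : (Fin n → γ) → Finset (Fin n → β) := fun r => {u | ok (blockEquiv e n (u, r))}
  have hBsum : ∑ r, B r = 1 := by
    rw [← hPsum, ← e.sum_comp, Fintype.sum_prod_type]
    simp [hP, ← mul_sum, ← sum_mul, hQ]
  have hmass : 1 - ε ≤ ∑ r, (∏ t, B (r t)) * ∑ u ∈ S r, ∏ t, Q (u t) := by
    have hsplit := sum_filter_add_sum_filter_not univ ok fun x => ∏ t, P (x t)
    rw [sum_pi_prod_eq_one P hPsum] at hsplit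
    have hok : ∑ x with ok x, ∏ t, P (x t) =
        ∑ r, (∏ t, B (r t)) * ∑ u ∈ S r, ∏ t, Q (u t) := by
      rw [sum_filter, ← (blockEquiv e n).sum_comp, Fintype.sum_prod_type, sum_comm]
      refine sum_congr rfl fun r _ => ?_
      rw [sum_filter, mul_sum]
      refine sum_congr rfl fun u _ => ?_
      simp only [blockEquiv_apply, hP, prod_mul_distrib]
      split_ifs <;> ring
    linarith
  have : Nonempty (Fin n → γ) := by
    by_contra h
    rw [not_nonempty_iff] at h
    simpa using sum_pi_prod_eq_one (ι := Fin n) B hBsum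
  obtain ⟨r₀, hr₀⟩ := Finite.exists_max fun r => ∑ u ∈ S r, ∏ t, Q (u t)
  refine ⟨S r₀, card_filter_decode_eq_le enc dec g i e hcol hg r₀, hmass.trans ?_⟩
  calc ∑ r, (∏ t, B (r t)) * ∑ u ∈ S r, ∏ t, Q (u t)
      ≤ ∑ r, (∏ t, B (r t)) * ∑ u ∈ S r₀, ∏ t, Q (u t) :=
        sum_le_sum fun r _ => mul_le_mul_of_nonneg_left (hr₀ r) (prod_nonneg fun t _ => hB0 _)
    _ = ∑ u ∈ S r₀, ∏ t, Q (u t) := by rw [← sum_mul, sum_pi_prod_eq_one B hBsum, one_mul]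

end DistributedCoding

section Shear

variable {ι α : Type*} [DecidableEq ι] (i : ι)

def shearAt [AddGroup α] (c : ({j // j ≠ i} → α) → α) :
    α × ({j // j ≠ i} → α) ≃ (ι → α) :=
  (Equiv.prodCongrLeft fun r => Equiv.addRight (c r)).trans (Equiv.funSplitAt i α).symm

variable [AddCommGroup α] (c : ({j // j ≠ i} → α) → α) (u : α) (r : {j // j ≠ i} → α)

@[simp] theorem shearAt_apply_self : shearAt i c (u, r) i = u + c r := by
  simp [shearAt]

theorem shearAt_apply_of_ne {j : ι} (hj : j ≠ i) : shearAt i c (u, r) j = r ⟨j, hj⟩ := by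
  simp [shearAt, hj]

theorem sum_shearAt [Fintype ι] : ∑ j, shearAt i c (u, r) j = u + c r + ∑ j, r j := by
  rw [Fintype.sum_eq_add_sum_subtype_ne _ i, shearAt_apply_self]
  exact congrArg _ (sum_congr rfl fun j _ => shearAt_apply_of_ne i c u r j.2)

end Shear

section Source

variable {m : ℕ}

def increments (x : Fin m → ZMod 2) (j : Fin m) : ZMod 2 :=
  if (j : ℕ) = 0 then x j else x j + x ⟨j - 1, by omega⟩

theorem increments_injective : Function.Injective (increments (m := m)) := by
  intro x x' h
  suffices ∀ a (ha : a < m), x ⟨a, ha⟩ = x' ⟨a, ha⟩ from funext fun j => this j j.2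
  intro a
  induction a with
  | zero => intro ha; simpa [increments] using congrFun h ⟨0, ha⟩
  | succ a ih =>
    intro ha
    have hstep := congrFun h ⟨a + 1, ha⟩
    simp only [increments, Nat.add_one_ne_zero, if_false, Nat.add_sub_cancel] at hstep
    rw [ih (by omega)] at hstep
    exact add_right_cancel hstep

-- The pmf of `Y_j = X_j - X_{j-1}` (0-based); their product is the source pmf `P(x)`.
noncomputable def srcFactor (p : ℝ) (x : Fin m → ZMod 2) (j : Fin m) : ℝ :=
  bern (if (j : ℕ) % 2 = 0 then 1 / 2 else p) (increments x j)

theorem sum_prod_srcFactor (p : ℝ) : ∑ x : Fin m → ZMod 2, ∏ j, srcFactor p x j = 1 := by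
  let w : Fin m → ℝ := fun j => if (j : ℕ) % 2 = 0 then 1 / 2 else p
  calc ∑ x : Fin m → ZMod 2, ∏ j, srcFactor p x j
      = ∑ y : Fin m → ZMod 2, ∏ j, bern (w j) (y j) :=
        (Equiv.ofBijective _ increments_injective.bijective_of_finite).sum_comp
          fun y => ∏ j, bern (w j) (y j)
    _ = 1 := by simp [← Fintype.prod_sum, sum_bern]

theorem srcFactor_nonneg {p : ℝ} (hp0 : 0 ≤ p) (hp1 : p ≤ 1) (x : Fin m → ZMod 2)
    (j : Fin m) : 0 ≤ srcFactor p x j := by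
  unfold srcFactor
  split_ifs
  exacts [bern_nonneg (by norm_num) (by norm_num) _, bern_nonneg hp0 hp1 _]

end Source

section Pairs

variable {k : ℕ} (i : Fin (2 * k))

-- For `i ∈ {2a, 2a+1}`, `partner i` is the other element of the pair and `pairOdd i = 2a+1`.
def partner : Fin (2 * k) := ⟨2 * (i / 2) + (1 - i % 2), by omega⟩

def pairOdd : Fin (2 * k) := ⟨2 * (i / 2) + 1, by omega⟩

theorem partner_ne : partner i ≠ i := by
  simp only [Ne, Fin.ext_iff, partner]
  omega

theorem srcFactor_pairOdd (p : ℝ) (x : Fin (2 * k) → ZMod 2) :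
    srcFactor p x (pairOdd i) = bern p (x i + x (partner i)) := by
  have hodd : ¬(pairOdd i : ℕ) % 2 = 0 := by simp only [pairOdd]; omega
  have hpos : ¬(pairOdd i : ℕ) = 0 := by simp only [pairOdd]; omega
  rw [srcFactor, increments, if_neg hodd, if_neg hpos]
  rcases Nat.mod_two_eq_zero_or_one i with h | h
  · have hup : pairOdd i = partner i := Fin.ext (by simp only [pairOdd, partner]; omega)
    have hdown : (⟨pairOdd i - 1, by omega⟩ : Fin (2 * k)) = i :=
      Fin.ext (by simp only [pairOdd]; omega)
    rw [hdown, hup, add_comm]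
  · have hup : pairOdd i = i := Fin.ext (by simp only [pairOdd]; omega)
    have hdown : (⟨pairOdd i - 1, by omega⟩ : Fin (2 * k)) = partner i :=
      Fin.ext (by simp only [pairOdd, partner]; omega)
    rw [hdown, hup]

theorem srcFactor_congr (p : ℝ) {x x' : Fin (2 * k) → ZMod 2} (hx : ∀ j ≠ i, x j = x' j)
    {j : Fin (2 * k)} (hj : j ≠ pairOdd i) : srcFactor p x j = srcFactor p x' j := by
  unfold srcFactor
  split_ifs with heven
  · rw [bern_half, bern_half]
  have hji : j ≠ i := fun h => hj (Fin.ext (by rw [h] at heven ⊢; simp only [pairOdd]; omega))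
  have hpos : (j : ℕ) ≠ 0 := by omega
  have hprev : (⟨j - 1, by omega⟩ : Fin (2 * k)) ≠ i := fun h =>
    hj (Fin.ext (by rw [Fin.ext_iff] at h; simp only [pairOdd] at h ⊢; omega))
  rw [increments, increments, if_neg hpos, if_neg hpos, hx j hji, hx _ hprev]

-- Writes `x` as `(u, r)` with `r = (x_j)_{j ≠ i}` and `u = x_i + x_{partner i} = Y_{pairOdd i}`.
def pairShear : ZMod 2 × ({j // j ≠ i} → ZMod 2) ≃ (Fin (2 * k) → ZMod 2) :=
  shearAt i fun r => r ⟨partner i, partner_ne i⟩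

noncomputable def restPmf (p : ℝ) (r : {j // j ≠ i} → ZMod 2) : ℝ :=
  ∏ j ∈ univ.erase (pairOdd i), srcFactor p (pairShear i (0, r)) j

theorem prod_srcFactor_pairShear (p : ℝ) (u : ZMod 2) (r : {j // j ≠ i} → ZMod 2) :
    ∏ j, srcFactor p (pairShear i (u, r)) j = bern p u * restPmf i p r := by
  rw [← mul_prod_erase _ _ (mem_univ (pairOdd i)), srcFactor_pairOdd, restPmf]
  congr 1
  · rw [pairShear, shearAt_apply_self, shearAt_apply_of_ne _ _ _ _ (partner_ne i), add_assoc,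
      CharTwo.add_self_eq_zero, add_zero]
  · refine prod_congr rfl fun j hj => srcFactor_congr i p (fun l hl => ?_) (ne_of_mem_erase hj)
    rw [pairShear, shearAt_apply_of_ne _ _ _ _ hl, shearAt_apply_of_ne _ _ _ _ hl]

theorem pairShear_apply_congr (u u' : ZMod 2) (r : {j // j ≠ i} → ZMod 2) {j : Fin (2 * k)}
    (hj : j ≠ i) : pairShear i (u, r) j = pairShear i (u', r) j := by
  rw [pairShear, shearAt_apply_of_ne _ _ _ _ hj, shearAt_apply_of_ne _ _ _ _ hj]

theorem sum_pairShear_injective (r : {j // j ≠ i} → ZMod 2) :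
    Function.Injective fun u => ∑ j, pairShear i (u, r) j := fun u u' h => by
  simpa only [pairShear, sum_shearAt, add_left_inj] using h

end Pairs

/-- `m = 2k` (even) binary sources `[X1;...;Xm] = L·[Y1;...;Ym]` with `L` the
lower-triangular all-ones matrix, the `Y i` independent, `Y i ~ Bern(1/2)` for `i` odd
and `Y i ~ Bern(p)` for `i` even (`0 < p < 1/2`); equivalently the joint pmf of the `X i`
is `∏ j, bern (w j) (x j - x (j-1))`. Any achievable rate tuple for distributed lossless
computation of `Z = X1 + ... + Xm (mod 2)` satisfies `R i ≥ h(p)` for every `i`, hence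
the sum rate is at least `m·h(p)`. -/
theorem stmt_18 (k : ℕ) (p : ℝ) (hp : 0 < p) (hp2 : p < 1 / 2) :
    ∀ R : Fin (2 * k) → ℝ,
      AchievableRate
        (fun x : Fin (2 * k) → ZMod 2 =>
          ∏ j : Fin (2 * k),
            bern (if (j : ℕ) % 2 = 0 then 1 / 2 else p)
              (if hj : (j : ℕ) = 0 then x j else x j + x ⟨(j : ℕ) - 1, by omega⟩))
        (fun x : Fin (2 * k) → ZMod 2 => ∑ i, x i) R →
      (∀ i, binH p ≤ R i) ∧ ((2 * k : ℝ) * binH p ≤ ∑ i, R i) := by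
  intro R hach
  have hp1 : p < 1 := by linarith
  have hR : ∀ i, binH p ≤ R i := by
    intro i
    refine le_of_forall_pos_le_add fun δ hδ => ?_
    obtain ⟨ε, hε, hconverse⟩ :=
      exists_pos_binH_sub_le_logb_div hp hp1 (d := δ / 3) (by positivity)
    obtain ⟨n, hn, M, hM, enc, dec, herr⟩ := hach (δ / 3) (by positivity) ε hε
    obtain ⟨S, hSM, hS⟩ := exists_finset_card_le_one_sub_le enc dec (fun x => ∑ j, x j) i
      (pairShear i) (fun x => ∏ j, srcFactor p x j) (bern p) (restPmf i p) (sum_prod_srcFactor p)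
      (sum_bern p) (fun r => prod_nonneg fun j _ => srcFactor_nonneg hp.le hp1.le _ j)
      (prod_srcFactor_pairShear i p) (pairShear_apply_congr i) (sum_pairShear_injective i) herr
    linarith [hconverse n hn S hS (M i) hSM, hM i]
  refine ⟨hR, ?_⟩
  calc (2 * k : ℝ) * binH p = ∑ _i : Fin (2 * k), binH p := by simp
    _ ≤ ∑ i, R i := sum_le_sum fun i _ => hR i
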